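/- Let H be a connected linear r-uniform hypergraph (r ≥ 2) whose edges are 2-colored with colors 1 and 2, with at least one edge of each color. If the subhypergraph H_1 of color-1 edges has average degree at least r(r−1)(p−1)+2r, then H contains a linear path of length at least p whose first edge has color 2 and whose remaining edges all have color 1. -/

import Mathlib

/-- The shadow graph of a hypergraph. -/
def shadowGraph {V : Type*} (E : Finset (Finset V)) : SimpleGraph V where
  Adj u v := u ≠ v ∧ ∃ e ∈ E, u ∈ e ∧ v ∈ e
  symm := by
    constructor; intro u v ⟨huv, e, he, hu, hv⟩
    exact ⟨huv.symm, e, he, hv, hu⟩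
  loopless := by constructor; intro v ⟨h, _⟩; exact h rfl

/-- A linear path of length ℓ in a hypergraph with edge set E. -/
def IsLinearPath {V : Type*} [DecidableEq V] (E : Finset (Finset V))
    (ℓ : ℕ) (e : ℕ → Finset V) : Prop :=
  (∀ i < ℓ, e i ∈ E) ∧
  (∀ i j, i < j → j < ℓ → e i ≠ e j) ∧
  (∀ i, i + 1 < ℓ → (e i ∩ e (i + 1)).card = 1) ∧
  (∀ i j, i + 2 ≤ j → j < ℓ → e i ∩ e j = ∅)

/-!
The colour-1 edges are so numerous that repeatedly discarding all colour-1 edges at a vertex of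
colour-1 degree at most `(r - 1) * (p - 1)` stops at a nonempty family `G` of colour-1 edges in
which every vertex has degree greater than `(r - 1) * (p - 1)`. By connectivity some edge walk
leads from a colour-2 edge to a vertex of `G`; a shortest one is a linear path coloured as
required whose last edge meets `G` in a vertex lying in no earlier edge, since every defect
would give a shorter walk. A linear path of length `ℓ < p` covers at most `(r - 1) * ℓ + 1`
vertices, and by linearity every covered vertex other than the end vertex `v` lies in at most one
edge of `G` through `v`; hence some edge of `G` through `v` meets the path only in `v`, and
appending it yields a longer path of the same kind.
-/

open Finset

section

variable {V : Type*} [DecidableEq V]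

theorem exists_nonempty_subset_forall_lt_card_filter_mem {k : ℕ} (F : Finset (Finset V))
    (hF : k * (F.biUnion id).card < F.card) :
    ∃ G ⊆ F, G.Nonempty ∧ ∀ v ∈ G.biUnion id, k < #{f ∈ G | v ∈ f} := by
  induction F using Finset.strongInduction with
  | H F ih =>
  by_cases hF' : ∀ v ∈ F.biUnion id, k < #{f ∈ F | v ∈ f}
  · exact ⟨F, subset_rfl, card_pos.mp (by omega), hF'⟩
  push Not at hF'
  obtain ⟨v, hv, hdeg⟩ := hF'
  obtain ⟨f, hf, hvf⟩ := mem_biUnion.mp hv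
  set F' := {f ∈ F | v ∉ f}
  have hsplit : #{f ∈ F | v ∈ f} + #F' = #F := card_filter_add_card_filter_not _
  have hverts : (F'.biUnion id).card + 1 ≤ (F.biUnion id).card := by
    have hsub : F'.biUnion id ⊆ (F.biUnion id).erase v := by
      intro w hw
      obtain ⟨g, hg, hwg⟩ := mem_biUnion.mp hw
      rw [mem_filter] at hg
      exact mem_erase.mpr ⟨fun h => hg.2 (h ▸ hwg), mem_biUnion.mpr ⟨g, hg.1, hwg⟩⟩
    have := card_le_card hsub
    rw [card_erase_of_mem hv] at this
    have := card_pos.mpr ⟨v, hv⟩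
    omega
  have hF'F : F' ⊂ F := by
    refine (ssubset_iff_of_subset (filter_subset _ _)).mpr ⟨f, hf, ?_⟩
    simpa [F'] using fun _ => hvf
  have hk : k * (F'.biUnion id).card + k ≤ k * (F.biUnion id).card := by
    simpa [Nat.mul_succ] using Nat.mul_le_mul_left k hverts
  obtain ⟨G, hGF', hG⟩ := ih F' hF'F (by omega)
  exact ⟨G, hGF'.trans hF'F.subset, hG⟩

theorem card_filter_inter_nonempty_le {D : Finset (Finset V)}
    (hD : ∀ e ∈ D, ∀ f ∈ D, e ≠ f → (e ∩ f).card ≤ 1) {v : V} (hv : ∀ f ∈ D, v ∈ f)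
    {S : Finset V} (hvS : v ∉ S) :
    #{f ∈ D | (f ∩ S).Nonempty} ≤ #S := by
  have hsub : {f ∈ D | (f ∩ S).Nonempty} ⊆ S.biUnion fun x => {f ∈ D | x ∈ f} := by
    intro f hf
    obtain ⟨hfD, x, hx⟩ := mem_filter.mp hf
    rw [mem_inter] at hx
    exact mem_biUnion.mpr ⟨x, hx.2, mem_filter.mpr ⟨hfD, hx.1⟩⟩
  have hstar : ∀ x ∈ S, #{f ∈ D | x ∈ f} ≤ 1 := by
    intro x hx
    refine card_le_one.mpr fun e he f hf => by_contra fun hef => ?_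
    rw [mem_filter] at he hf
    have hvx : v ≠ x := fun h => hvS (h ▸ hx)
    have : #{v, x} ≤ (e ∩ f).card :=
      card_le_card (by simp [insert_subset_iff, hv e he.1, hv f hf.1, he.2, hf.2])
    rw [card_pair hvx] at this
    have := hD e he.1 f hf.1 hef
    omega
  calc #{f ∈ D | (f ∩ S).Nonempty}
      ≤ ∑ x ∈ S, #{f ∈ D | x ∈ f} := (card_le_card hsub).trans card_biUnion_le
    _ ≤ ∑ _x ∈ S, 1 := sum_le_sum hstar
    _ = #S := by simp

namespace IsLinearPath

variable {E : Finset (Finset V)} {e : ℕ → Finset V}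

theorem card_biUnion_range_le {r ℓ : ℕ} (hU : ∀ f ∈ E, f.card = r) (h : IsLinearPath E ℓ e) :
    ((range ℓ).biUnion e).card ≤ (r - 1) * ℓ + 1 := by
  suffices ∀ m ≤ ℓ, ((range m).biUnion e).card ≤ (r - 1) * m + 1 from this ℓ le_rfl
  intro m
  induction m with
  | zero => simp
  | succ m ih =>
    intro hm
    rw [range_add_one, biUnion_insert, Nat.mul_succ]
    have hem := hU _ (h.1 m (by omega))
    have hunion := card_union_add_card_inter (e m) ((range m).biUnion e)
    rcases Nat.eq_zero_or_pos m with rfl | hm0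
    · simp only [range_zero, biUnion_empty, union_empty, hem]
      omega
    have hshared : 1 ≤ (e m ∩ (range m).biUnion e).card := by
      have hcons := h.2.2.1 (m - 1) (by omega)
      rw [Nat.sub_add_cancel hm0, inter_comm] at hcons
      rw [← hcons]
      exact card_le_card (inter_subset_inter_left
        (subset_biUnion_of_mem e (mem_range.mpr (by omega))))
    have := ih (by omega)
    omega

theorem update {t : ℕ} (h : IsLinearPath E (t + 1) e) {v : V} (hvt : v ∈ e t)
    (hv : ∀ i < t, v ∉ e i) {f : Finset V} (hf : f ∈ E)
    (hfU : f ∩ (range (t + 1)).biUnion e = {v})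
    {w : V} (hwf : w ∈ f) (hwU : w ∉ (range (t + 1)).biUnion e) :
    IsLinearPath E (t + 2) (Function.update e (t + 1) f) := by
  obtain ⟨hE, hne, hcons, hfar⟩ := h
  have hsub : ∀ i ≤ t, e i ⊆ (range (t + 1)).biUnion e :=
    fun i hi => subset_biUnion_of_mem e (mem_range.mpr (by omega))
  have hinter : ∀ i ≤ t, e i ∩ f ⊆ {v} := fun i hi => by
    rw [← hfU, inter_comm f]
    exact inter_subset_inter_right (hsub i hi)
  have hvf : v ∈ f := (mem_inter.mp (hfU ▸ mem_singleton_self v)).1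
  have hupd : ∀ i ≤ t, Function.update e (t + 1) f i = e i :=
    fun i hi => Function.update_of_ne (by omega) _ _
  refine ⟨fun i hi => ?_, fun i j hij hj => ?_, fun i hi => ?_, fun i j hij hj => ?_⟩
  · rcases Nat.lt_or_ge i (t + 1) with hi' | hi'
    · rw [hupd i (by omega)]; exact hE i hi'
    · rw [show i = t + 1 by omega, Function.update_self]; exact hf
  · rw [hupd i (by omega)]
    rcases Nat.lt_or_ge j (t + 1) with hj' | hj'
    · rw [hupd j (by omega)]; exact hne i j hij hj'
    · rw [show j = t + 1 by omega, Function.update_self]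
      exact fun hef => hwU (hsub i (by omega) (hef ▸ hwf))
  · rw [hupd i (by omega)]
    rcases Nat.lt_or_ge (i + 1) (t + 1) with hi' | hi'
    · rw [hupd (i + 1) (by omega)]; exact hcons i hi'
    · obtain rfl : i = t := by omega
      rw [Function.update_self, card_eq_one]
      exact ⟨v, Subset.antisymm (hinter i le_rfl) (by simpa using ⟨hvt, hvf⟩)⟩
  · rw [hupd i (by omega)]
    rcases Nat.lt_or_ge j (t + 1) with hj' | hj'
    · rw [hupd j (by omega)]; exact hfar i j hij hj'
    · rw [show j = t + 1 by omega, Function.update_self, eq_empty_iff_forall_notMem]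
      intro x hx
      have hxv := mem_singleton.mp (hinter i (by omega) hx)
      exact hv i (by omega) (hxv ▸ (mem_inter.mp hx).1)

theorem exists_edge_inter_eq_singleton {r ℓ : ℕ} (hr : 2 ≤ r) (hU : ∀ f ∈ E, f.card = r)
    (hlin : ∀ e ∈ E, ∀ f ∈ E, e ≠ f → (e ∩ f).card ≤ 1) (h : IsLinearPath E ℓ e)
    {G : Finset (Finset V)} (hGE : G ⊆ E) {v : V} (hv : v ∈ (range ℓ).biUnion e)
    (hdeg : (r - 1) * ℓ < #{f ∈ G | v ∈ f}) :
    ∃ f ∈ G, v ∈ f ∧ f ∩ (range ℓ).biUnion e = {v} ∧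
      ∃ w ∈ f, w ∉ (range ℓ).biUnion e := by
  set U := (range ℓ).biUnion e
  set D := {f ∈ G | v ∈ f}
  have hDv : ∀ f ∈ D, v ∈ f := fun f hf => (mem_filter.mp hf).2
  have hmeet : #{f ∈ D | (f ∩ U.erase v).Nonempty} < #D := by
    have hS : #{f ∈ D | (f ∩ U.erase v).Nonempty} ≤ #(U.erase v) :=
      card_filter_inter_nonempty_le
      (fun e he f hf => hlin e (hGE (mem_filter.mp he).1) f (hGE (mem_filter.mp hf).1))
      hDv (notMem_erase v U)
    have hUcard : #U ≤ (r - 1) * ℓ + 1 := h.card_biUnion_range_le hU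
    rw [card_erase_of_mem hv] at hS
    omega
  obtain ⟨f, hfD, hfU⟩ : ∃ f ∈ D, ¬ (f ∩ U.erase v).Nonempty := by
    by_contra! hall
    exact hmeet.ne (congrArg card (filter_true_of_mem hall))
  obtain ⟨hfG, hvf⟩ := mem_filter.mp hfD
  have hfUv : f ∩ U = {v} := by
    ext x
    constructor
    · intro hx
      rw [mem_singleton]
      by_contra hxv
      exact hfU ⟨x, mem_inter.mpr ⟨(mem_inter.mp hx).1, mem_erase.mpr ⟨hxv, (mem_inter.mp hx).2⟩⟩⟩
    · rintro hx
      rw [mem_singleton.mp hx]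
      exact mem_inter.mpr ⟨hvf, hv⟩
  refine ⟨f, hfG, hvf, hfUv, ?_⟩
  by_contra! hfsub
  have hcard := hU f (hGE hfG)
  rw [← inter_eq_left.mpr hfsub, hfUv, card_singleton] at hcard
  omega

end IsLinearPath

def IsSpecialPath (E : Finset (Finset V)) (c : Finset V → Bool) (ℓ : ℕ) (e : ℕ → Finset V) :
    Prop :=
  IsLinearPath E ℓ e ∧ c (e 0) = false ∧ ∀ i, 1 ≤ i → i < ℓ → c (e i) = true

def HasFreshEndIn (W : Finset V) (t : ℕ) (e : ℕ → Finset V) : Prop :=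
  ∃ v ∈ W, v ∈ e t ∧ ∀ i < t, v ∉ e i

section Growth

variable {E G : Finset (Finset V)} {r : ℕ} {c : Finset V → Bool}

theorem IsSpecialPath.extend (hr : 2 ≤ r) (hU : ∀ f ∈ E, f.card = r)
    (hlin : ∀ e ∈ E, ∀ f ∈ E, e ≠ f → (e ∩ f).card ≤ 1) (hGE : G ⊆ E)
    (hGc : ∀ f ∈ G, c f = true) {t : ℕ} {e : ℕ → Finset V} (h : IsSpecialPath E c (t + 1) e)
    {v : V} (hvt : v ∈ e t) (hv : ∀ i < t, v ∉ e i)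
    (hdeg : (r - 1) * (t + 1) < #{f ∈ G | v ∈ f}) :
    ∃ e', IsSpecialPath E c (t + 2) e' ∧ HasFreshEndIn (G.biUnion id) (t + 1) e' := by
  obtain ⟨hpath, hc0, hc⟩ := h
  have hvU : v ∈ (range (t + 1)).biUnion e := mem_biUnion.mpr ⟨t, by simp, hvt⟩
  obtain ⟨f, hfG, -, hfU, w, hwf, hwU⟩ :=
    hpath.exists_edge_inter_eq_singleton hr hU hlin hGE hvU hdeg
  refine ⟨Function.update e (t + 1) f,
    ⟨hpath.update hvt hv (hGE hfG) hfU hwf hwU, ?_, fun i hi1 hi2 => ?_⟩,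
    w, mem_biUnion.mpr ⟨f, hfG, hwf⟩, by simpa using hwf, fun i hi => ?_⟩
  · simpa using hc0
  · rcases Nat.lt_or_ge i (t + 1) with hi | hi
    · rw [Function.update_of_ne (by omega)]; exact hc i hi1 hi
    · rw [show i = t + 1 by omega, Function.update_self]; exact hGc f hfG
  · rw [Function.update_of_ne (by omega)]
    exact fun hwi => hwU (mem_biUnion.mpr ⟨i, mem_range.mpr hi, hwi⟩)

theorem IsSpecialPath.exists_length_ge (hr : 2 ≤ r) (hU : ∀ f ∈ E, f.card = r)
    (hlin : ∀ e ∈ E, ∀ f ∈ E, e ≠ f → (e ∩ f).card ≤ 1) (hGE : G ⊆ E)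
    (hGc : ∀ f ∈ G, c f = true) {p : ℕ}
    (hdeg : ∀ v ∈ G.biUnion id, (r - 1) * (p - 1) < #{f ∈ G | v ∈ f})
    {t : ℕ} {e : ℕ → Finset V} (h : IsSpecialPath E c (t + 1) e)
    (hend : HasFreshEndIn (G.biUnion id) t e) :
    ∃ ℓ e', p ≤ ℓ ∧ IsSpecialPath E c ℓ e' := by
  induction hk : p - (t + 1) generalizing t e with
  | zero => exact ⟨t + 1, e, by omega, h⟩
  | succ k ih =>
    obtain ⟨v, hvG, hvt, hv⟩ := hend
    have hdeg' : (r - 1) * (t + 1) < #{f ∈ G | v ∈ f} :=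
      lt_of_le_of_lt (Nat.mul_le_mul_left _ (by omega)) (hdeg v hvG)
    obtain ⟨e', h', hend'⟩ := h.extend hr hU hlin hGE hGc hvt hv hdeg'
    exact ih h' hend' (by omega)

end Growth

def IsEdgeWalk (E : Finset (Finset V)) (s : ℕ) (g : ℕ → Finset V) : Prop :=
  (∀ i ≤ s, g i ∈ E) ∧ ∀ i < s, (g i ∩ g (i + 1)).Nonempty

namespace IsEdgeWalk

variable {E : Finset (Finset V)} {s : ℕ} {g : ℕ → Finset V}

theorem of_le (h : IsEdgeWalk E s g) {m : ℕ} (hm : m ≤ s) : IsEdgeWalk E m g :=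
  ⟨fun i hi => h.1 i (by omega), fun i hi => h.2 i (by omega)⟩

theorem drop (h : IsEdgeWalk E s g) {i : ℕ} (hi : i ≤ s) :
    IsEdgeWalk E (s - i) (fun t => g (t + i)) := by
  refine ⟨fun t ht => h.1 _ (by omega), fun t ht => ?_⟩
  dsimp only
  rw [show t + 1 + i = t + i + 1 by omega]
  exact h.2 _ (by omega)

theorem shortcut (h : IsEdgeWalk E s g) {i k : ℕ} (hik : i + 1 + k ≤ s)
    (hmeet : (g i ∩ g (i + 1 + k)).Nonempty) :
    IsEdgeWalk E (s - k) (fun t => if t ≤ i then g t else g (t + k)) := by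
  refine ⟨fun t ht => ?_, fun t ht => ?_⟩ <;> dsimp only
  · split_ifs <;> exact h.1 _ (by omega)
  · rcases lt_trichotomy t i with hti | rfl | hti
    · rw [if_pos hti.le, if_pos (by omega)]; exact h.2 t (by omega)
    · rw [if_pos le_rfl, if_neg (by omega)]; exact hmeet
    · rw [if_neg (by omega), if_neg (by omega), add_right_comm]; exact h.2 _ (by omega)

theorem exists_of_walk {u w : V} (q : (shadowGraph E).Walk u w) {a : Finset V} (ha : a ∈ E)
    (hua : u ∈ a) : ∃ s g, IsEdgeWalk E s g ∧ g 0 = a ∧ w ∈ g s := by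
  induction q generalizing a with
  | nil => exact ⟨0, fun _ => a, ⟨fun _ _ => ha, fun _ h => absurd h (Nat.not_lt_zero _)⟩, rfl, hua⟩
  | cons hadj q ih =>
    obtain ⟨-, b, hb, hub, hxb⟩ := hadj
    obtain ⟨s, g, hg, hg0, hwg⟩ := ih hb hxb
    refine ⟨s + 1, fun n => Nat.casesOn n a g, ⟨fun i hi => ?_, fun i hi => ?_⟩, rfl, hwg⟩
    · cases i with
      | zero => exact ha
      | succ i => exact hg.1 i (by omega)
    · cases i with
      | zero => exact ⟨_, mem_inter.mpr ⟨hua, show _ ∈ g 0 by rw [hg0]; exact hub⟩⟩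
      | succ i => exact hg.2 i (by omega)

end IsEdgeWalk

theorem exists_specialPath_of_isEdgeWalk {E : Finset (Finset V)}
    (hlin : ∀ e ∈ E, ∀ f ∈ E, e ≠ f → (e ∩ f).card ≤ 1) {c : Finset V → Bool} {W : Finset V}
    (hP : ∃ s g, IsEdgeWalk E s g ∧ c (g 0) = false ∧ (g s ∩ W).Nonempty) :
    ∃ t e, IsSpecialPath E c (t + 1) e ∧ HasFreshEndIn W t e := by
  classical
  obtain ⟨g, hg, hg0, hgW⟩ := Nat.find_spec hP
  set s := Nat.find hP
  have hmin : ∀ s' < s, ¬ ∃ g, IsEdgeWalk E s' g ∧ c (g 0) = false ∧ (g s' ∩ W).Nonempty :=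
    fun _ => Nat.find_min hP
  have havoid : ∀ i < s, g i ∩ W = ∅ := fun i hi =>
    not_nonempty_iff_eq_empty.mp fun hiW => hmin i hi ⟨g, hg.of_le hi.le, hg0, hiW⟩
  have hcolour : ∀ i, 1 ≤ i → i ≤ s → c (g i) = true := by
    intro i hi1 hi2
    by_contra hci
    refine hmin (s - i) (by omega) ⟨_, hg.drop hi2, by simpa using hci, ?_⟩
    simpa [Nat.sub_add_cancel hi2] using hgW
  have hfar : ∀ i j, i + 2 ≤ j → j ≤ s → g i ∩ g j = ∅ := by
    intro i j hij hjs
    obtain ⟨k, rfl⟩ : ∃ k, j = i + 1 + (k + 1) := ⟨j - i - 2, by omega⟩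
    refine not_nonempty_iff_eq_empty.mp fun hmeet => hmin (s - (k + 1)) (by omega)
      ⟨_, hg.shortcut hjs hmeet, by simpa using hg0, ?_⟩
    rwa [if_neg (by omega), Nat.sub_add_cancel (by omega)]
  have hne : ∀ i j, i < j → j ≤ s → g i ≠ g j := by
    intro i j hij hjs hgij
    rcases Nat.lt_or_ge j s with hj | hj
    · obtain ⟨x, hx⟩ := hg.2 j hj
      rw [← hgij, hfar i (j + 1) (by omega) hj] at hx
      simp at hx
    · obtain rfl : j = s := by omega
      rw [← hgij, havoid i hij] at hgW
      simp at hgW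
  have hcons : ∀ i, i + 1 < s + 1 → (g i ∩ g (i + 1)).card = 1 := by
    intro i hi
    have hle := hlin _ (hg.1 i (by omega)) _ (hg.1 (i + 1) (by omega))
      (hne i (i + 1) (by omega) (by omega))
    have hpos := (hg.2 i (by omega)).card_pos
    omega
  have hpath : IsLinearPath E (s + 1) g :=
    ⟨fun i hi => hg.1 i (by omega), fun i j hij hj => hne i j hij (by omega), hcons,
      fun i j hij hj => hfar i j hij (by omega)⟩
  obtain ⟨v, hv⟩ := hgW
  obtain ⟨hvs, hvW⟩ := mem_inter.mp hv
  refine ⟨s, g, ⟨hpath, hg0, fun i hi1 hi2 => hcolour i hi1 (by omega)⟩, v, hvW, hvs,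
    fun i hi hvi => ?_⟩
  simpa [havoid i hi] using mem_inter.mpr ⟨hvi, hvW⟩

end

theorem stmt_11_general {V : Type*} [Fintype V] [DecidableEq V] (r p : ℕ)
    (hr : 2 ≤ r)
    (E : Finset (Finset V)) (hU : ∀ e ∈ E, e.card = r)
    (hlin : ∀ e ∈ E, ∀ f ∈ E, e ≠ f → (e ∩ f).card ≤ 1)
    (hconn : (shadowGraph E).Connected)
    (c : Finset V → Bool)
    (h2 : ∃ e ∈ E, c e = false)
    (hdeg : (r * (r - 1) * (p - 1) + 2 * r) * Fintype.card V ≤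
      r * (E.filter (fun e => c e = true)).card) :
    ∃ (ℓ : ℕ) (e : ℕ → Finset V), p ≤ ℓ ∧ IsLinearPath E ℓ e ∧
      c (e 0) = false ∧ ∀ i, 1 ≤ i → i < ℓ → c (e i) = true := by
  set E₁ := E.filter (fun e => c e = true)
  obtain ⟨f₀, hf₀E, hf₀c⟩ := h2
  obtain ⟨u, hu⟩ : f₀.Nonempty := card_pos.mp (by rw [hU f₀ hf₀E]; omega)
  have hcore : (r - 1) * (p - 1) * (E₁.biUnion id).card < #E₁ := by
    have hV : 0 < Fintype.card V := Fintype.card_pos_iff.mpr ⟨u⟩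
    have hE₁ : ((r - 1) * (p - 1) + 2) * Fintype.card V ≤ #E₁ := by
      refine Nat.le_of_mul_le_mul_left ?_ (by omega : 0 < r)
      calc r * (((r - 1) * (p - 1) + 2) * Fintype.card V)
          = (r * (r - 1) * (p - 1) + 2 * r) * Fintype.card V := by ring
        _ ≤ r * #E₁ := hdeg
    calc (r - 1) * (p - 1) * (E₁.biUnion id).card
        ≤ (r - 1) * (p - 1) * Fintype.card V := Nat.mul_le_mul_left _ (card_le_univ _)
      _ < ((r - 1) * (p - 1) + 2) * Fintype.card V := by nlinarith
      _ ≤ #E₁ := hE₁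
  obtain ⟨G, hGE₁, ⟨g₀, hg₀⟩, hGdeg⟩ := exists_nonempty_subset_forall_lt_card_filter_mem E₁ hcore
  have hGE : G ⊆ E := hGE₁.trans (filter_subset _ _)
  obtain ⟨w, hw⟩ : g₀.Nonempty := card_pos.mp (by rw [hU g₀ (hGE hg₀)]; omega)
  obtain ⟨s, g, hg, rfl, hws⟩ :=
    IsEdgeWalk.exists_of_walk (hconn.preconnected u w).some hf₀E hu
  have hwG : w ∈ G.biUnion id := mem_biUnion.mpr ⟨g₀, hg₀, hw⟩
  obtain ⟨t, e, hspecial, hend⟩ := exists_specialPath_of_isEdgeWalk hlin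
    ⟨s, g, hg, hf₀c, w, mem_inter.mpr ⟨hws, hwG⟩⟩
  exact hspecial.exists_length_ge hr hU hlin hGE
    (fun f hf => (mem_filter.mp (hGE₁ hf)).2) hGdeg hend

/-- the special-path lemma: Let H be a connected linear r-uniform
hypergraph (r ≥ 2), edges 2-colored (color 1 = `true`, color 2 = `false`) with at
least one edge of each color. If the color-1 subhypergraph has average degree at
least r(r−1)(p−1)+2r, then H contains a linear path of length at least p whose
first edge has color 2 and all remaining edges have color 1. -/
theorem stmt_11 {V : Type*} [Fintype V] [DecidableEq V] (r p : ℕ)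
    (hr : 2 ≤ r) (hp : 2 ≤ p)
    (E : Finset (Finset V)) (hU : ∀ e ∈ E, e.card = r)
    (hlin : ∀ e ∈ E, ∀ f ∈ E, e ≠ f → (e ∩ f).card ≤ 1)
    (hconn : (shadowGraph E).Connected)
    (c : Finset V → Bool)
    (h2 : ∃ e ∈ E, c e = false) (h1 : ∃ e ∈ E, c e = true)
    (hdeg : (r * (r - 1) * (p - 1) + 2 * r) * Fintype.card V ≤
      r * (E.filter (fun e => c e = true)).card) :
    ∃ (ℓ : ℕ) (e : ℕ → Finset V), p ≤ ℓ ∧ IsLinearPath E ℓ e ∧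
      c (e 0) = false ∧ ∀ i, 1 ≤ i → i < ℓ → c (e i) = true :=
  stmt_11_general r p hr E hU hlin hconn c h2 hdeg
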